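/- Let d be a positive integer and let P be a probability measure on ℝ^d that is absolutely continuous with respect to Lebesgue measure with density p, has finite second moment, finite differential-entropy integral ∫ p(x)|log p(x)| dx < ∞, mean μ, and positive-definite covariance matrix Σ. Let μ̂ ∈ ℝ^d, let Σ̂ be a d×d symmetric positive-definite matrix with smallest eigenvalue λ̂_min, and let Q₀ = N(0, I_d), Q̂ = N(μ̂, Σ̂). Then D_KL(P ‖ Q̂) − D_KL(P ‖ Q₀) ≤ (1/2)·( (1/λ̂_min)·(‖μ − μ̂‖₂² + ‖Σ − Σ̂‖_N) + √d·‖Σ − Σ̂‖_F − ‖μ‖₂² ). -/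

import Mathlib

/-!
Against a Gaussian `N(m, S)`, `log (dP/dQ) = log p + (d/2) log 2π + (1/2) log det S +
(1/2) (x - m)ᵀ S⁻¹ (x - m)`, and the quadratic part integrates to `tr (S⁻¹ Σ) + (μ - m)ᵀ S⁻¹ (μ - m)`.
Hence `D_KL(P ‖ Q̂) - D_KL(P ‖ Q₀)` equals
`(1/2) (log det Σ̂ + tr (Σ̂⁻¹ Σ) + (μ - μ̂)ᵀ Σ̂⁻¹ (μ - μ̂) - tr Σ - ‖μ‖²)`, and each term is bounded
spectrally: `log det Σ̂ ≤ tr Σ̂ - d` (apply `log t ≤ t - 1` to the eigenvalues);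
`tr (Σ̂⁻¹ Σ) = d + tr (Σ̂⁻¹ (Σ - Σ̂)) ≤ d + ‖Σ - Σ̂‖_N / λ̂_min`, by expanding `Σ - Σ̂` in its
orthonormal eigenbasis and using `0 ≤ uᵀ Σ̂⁻¹ u ≤ 1 / λ̂_min` for unit `u`; the mean term is at most
`‖μ - μ̂‖² / λ̂_min`; and `tr Σ̂ - tr Σ ≤ √d ‖Σ - Σ̂‖_F` by Cauchy–Schwarz.
-/

open MeasureTheory Matrix Real

/-- The density of the Gaussian measure `N(m, S)` on `ℝ^d` (w.r.t. Lebesgue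
measure), for a symmetric positive-definite `S`:
`q_{m,S}(x) = (2π)^{−d/2} (det S)^{−1/2} exp(−(x − m)ᵀ S⁻¹ (x − m)/2)`. -/
noncomputable def gaussDensity {d : ℕ} (m : Fin d → ℝ)
    (S : Matrix (Fin d) (Fin d) ℝ) (x : Fin d → ℝ) : ℝ :=
  (2 * π) ^ (-(d : ℝ) / 2) * S.det ^ (-(1 : ℝ) / 2) *
    Real.exp (-((x - m) ⬝ᵥ (S⁻¹ *ᵥ (x - m))) / 2)

/-- The Kullback–Leibler divergence `D_KL(P ‖ Q) = ∫ log(dP/dQ) dP` of a measure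
`P` with Lebesgue density `p` against the Gaussian `N(m, S)`, expressed through
the density ratio `dP/dQ = p / q_{m,S}`. -/
noncomputable def klDivGauss {d : ℕ} (P : Measure (Fin d → ℝ))
    (p : (Fin d → ℝ) → ℝ) (m : Fin d → ℝ) (S : Matrix (Fin d) (Fin d) ℝ) : ℝ :=
  ∫ x, Real.log (p x / gaussDensity m S x) ∂P

namespace Matrix

variable {n : Type*} [Fintype n]

lemma abs_trace_le_sqrt_card_mul_sqrt_sum_sq (A : Matrix n n ℝ) :
    |A.trace| ≤ √(Fintype.card n) * √(∑ i, ∑ j, A i j ^ 2) := by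
  calc |A.trace| ≤ ∑ i, 1 * |A i i| := by simpa [trace] using Finset.abs_sum_le_sum_abs _ _
    _ ≤ √(∑ _i : n, (1 : ℝ) ^ 2) * √(∑ i, |A i i| ^ 2) := Real.sum_mul_le_sqrt_mul_sqrt _ _ _
    _ ≤ √(Fintype.card n) * √(∑ i, ∑ j, A i j ^ 2) := by
        simp only [one_pow, Finset.sum_const, Finset.card_univ, nsmul_eq_mul, mul_one, sq_abs]
        gcongr with i
        exact Finset.single_le_sum (f := fun j => A i j ^ 2) (fun j _ => sq_nonneg _)
          (Finset.mem_univ i)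

variable [DecidableEq n] {B M : Matrix n n ℝ}

lemma IsHermitian.eq_mul_diagonal_mul_star (hM : M.IsHermitian) :
    M = (hM.eigenvectorUnitary : Matrix n n ℝ) * diagonal hM.eigenvalues *
      star (hM.eigenvectorUnitary : Matrix n n ℝ) := by
  conv_lhs => rw [hM.spectral_theorem]
  simp [Unitary.conjStarAlgAut_apply]

lemma PosDef.inv_eq_mul_diagonal_mul_star (hB : B.PosDef) :
    B⁻¹ = (hB.1.eigenvectorUnitary : Matrix n n ℝ) * diagonal hB.1.eigenvalues⁻¹ *
      star (hB.1.eigenvectorUnitary : Matrix n n ℝ) := by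
  set U : Matrix n n ℝ := ↑hB.1.eigenvectorUnitary
  have hU : star U * U = 1 := Unitary.coe_star_mul_self _
  have hU' : U * star U = 1 := Unitary.coe_mul_star_self _
  have hD : diagonal hB.1.eigenvalues * diagonal hB.1.eigenvalues⁻¹ = 1 := by
    rw [diagonal_mul_diagonal, ← diagonal_one]
    exact congrArg diagonal (funext fun i => mul_inv_cancel₀ (hB.eigenvalues_pos i).ne')
  refine inv_eq_right_inv ?_
  calc B * (U * diagonal hB.1.eigenvalues⁻¹ * star U)
      = U * diagonal hB.1.eigenvalues * (star U * U) * diagonal hB.1.eigenvalues⁻¹ * star U :=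
        congrArg (· * _) hB.1.eq_mul_diagonal_mul_star |>.trans (by noncomm_ring)
    _ = 1 := by rw [hU, mul_one, mul_assoc U, hD, mul_one, hU']

lemma PosDef.iInf_eigenvalues_pos [Nonempty n] (hB : B.PosDef) :
    0 < ⨅ i, hB.1.eigenvalues i := by
  obtain ⟨i, hi⟩ := exists_eq_ciInf_of_finite (f := hB.1.eigenvalues)
  exact hi ▸ hB.eigenvalues_pos i

lemma PosDef.posSemidef_smul_one_sub_inv [Nonempty n] (hB : B.PosDef) :
    ((⨅ i, hB.1.eigenvalues i)⁻¹ • (1 : Matrix n n ℝ) - B⁻¹).PosSemidef := by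
  set U : Matrix n n ℝ := ↑hB.1.eigenvectorUnitary
  have hsmul : (⨅ i, hB.1.eigenvalues i)⁻¹ • (1 : Matrix n n ℝ) =
      U * diagonal (fun _ => (⨅ i, hB.1.eigenvalues i)⁻¹) * star U := by
    rw [← smul_one_eq_diagonal, mul_smul_comm, smul_mul_assoc, mul_one]
    exact congrArg _ (Unitary.coe_mul_star_self _).symm
  rw [hsmul, hB.inv_eq_mul_diagonal_mul_star, ← sub_mul, ← mul_sub, diagonal_sub,
    star_eq_conjTranspose]
  refine PosSemidef.mul_mul_conjTranspose_same (posSemidef_diagonal_iff.2 fun i => ?_) _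
  exact sub_nonneg.2 <| inv_anti₀ hB.iInf_eigenvalues_pos <|
    ciInf_le (Set.finite_range _).bddBelow i

lemma PosDef.dotProduct_inv_mulVec_le (hB : B.PosDef) (v : n → ℝ) :
    v ⬝ᵥ (B⁻¹ *ᵥ v) ≤ (⨅ i, hB.1.eigenvalues i)⁻¹ * (v ⬝ᵥ v) := by
  rcases isEmpty_or_nonempty n with hn | hn
  · simp [dotProduct] -- the infimum is the junk value `0`, but both sides are empty sums
  have := hB.posSemidef_smul_one_sub_inv.dotProduct_mulVec_nonneg v
  rw [star_trivial, sub_mulVec, dotProduct_sub, smul_mulVec, one_mulVec, dotProduct_smul,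
    smul_eq_mul] at this
  linarith

lemma IsHermitian.trace_mul_eq_sum_eigenvalues_mul (hM : M.IsHermitian) (A : Matrix n n ℝ) :
    (A * M).trace = ∑ i, hM.eigenvalues i *
      (⇑(hM.eigenvectorBasis i) ⬝ᵥ (A *ᵥ ⇑(hM.eigenvectorBasis i))) := by
  set V : Matrix n n ℝ := ↑hM.eigenvectorUnitary
  calc (A * M).trace = (star V * A * V * diagonal hM.eigenvalues).trace := by
        conv_lhs => rw [hM.eq_mul_diagonal_mul_star]
        rw [← Matrix.mul_assoc, ← Matrix.mul_assoc, trace_mul_comm, ← Matrix.mul_assoc,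
          ← Matrix.mul_assoc]
    _ = _ := by
        simp only [trace, diag, mul_diagonal]
        refine Finset.sum_congr rfl fun i _ => ?_
        simp only [V, mul_apply, star_apply, star_trivial, eigenvectorUnitary_apply, dotProduct,
          mulVec, Finset.mul_sum, Finset.sum_mul]
        rw [Finset.sum_comm]
        exact Finset.sum_congr rfl fun _ _ => Finset.sum_congr rfl fun _ _ => by ring

lemma IsHermitian.dotProduct_eigenvectorBasis_self (hM : M.IsHermitian) (i : n) :
    ⇑(hM.eigenvectorBasis i) ⬝ᵥ ⇑(hM.eigenvectorBasis i) = 1 := by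
  have h := hM.eigenvectorBasis.inner_eq_one i
  rwa [EuclideanSpace.inner_eq_star_dotProduct, star_trivial] at h

lemma PosDef.trace_inv_mul_le (hB : B.PosDef) (hM : M.IsHermitian) :
    (B⁻¹ * M).trace ≤ (⨅ i, hB.1.eigenvalues i)⁻¹ * ∑ i, |hM.eigenvalues i| := by
  rw [hM.trace_mul_eq_sum_eigenvalues_mul, Finset.mul_sum]
  refine Finset.sum_le_sum fun i _ => ?_
  set u := ⇑(hM.eigenvectorBasis i)
  have hq₀ : 0 ≤ u ⬝ᵥ (B⁻¹ *ᵥ u) := by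
    simpa using hB.inv.posSemidef.dotProduct_mulVec_nonneg u
  have hq₁ : u ⬝ᵥ (B⁻¹ *ᵥ u) ≤ (⨅ i, hB.1.eigenvalues i)⁻¹ := by
    simpa [u, hM.dotProduct_eigenvectorBasis_self] using hB.dotProduct_inv_mulVec_le u
  calc hM.eigenvalues i * (u ⬝ᵥ (B⁻¹ *ᵥ u)) ≤ |hM.eigenvalues i| * (u ⬝ᵥ (B⁻¹ *ᵥ u)) :=
        mul_le_mul_of_nonneg_right (le_abs_self _) hq₀
    _ ≤ |hM.eigenvalues i| * (⨅ i, hB.1.eigenvalues i)⁻¹ :=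
        mul_le_mul_of_nonneg_left hq₁ (abs_nonneg _)
    _ = _ := mul_comm _ _

lemma PosDef.log_det_le_trace_sub_card (hB : B.PosDef) :
    Real.log B.det ≤ B.trace - Fintype.card n := by
  rw [hB.1.det_eq_prod_eigenvalues, hB.1.trace_eq_sum_eigenvalues]
  simp only [RCLike.ofReal_real_eq_id, id]
  rw [Real.log_prod fun i _ => (hB.eigenvalues_pos i).ne']
  calc ∑ i, Real.log (hB.1.eigenvalues i) ≤ ∑ i, (hB.1.eigenvalues i - 1) :=
        Finset.sum_le_sum fun i _ => Real.log_le_sub_one_of_pos (hB.eigenvalues_pos i)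
    _ = _ := by simp [Finset.sum_sub_distrib]

end Matrix

open ProbabilityTheory

lemma integral_sub_mul_sub_eq_covariance_add {Ω : Type*} [MeasurableSpace Ω] {μ : Measure Ω}
    [IsProbabilityMeasure μ] {X Y : Ω → ℝ} (hX : MemLp X 2 μ) (hY : MemLp Y 2 μ) (a b : ℝ) :
    ∫ ω, (X ω - a) * (Y ω - b) ∂μ = cov[X, Y; μ] + (μ[X] - a) * (μ[Y] - b) := by
  have hXa : MemLp (fun ω => X ω - a) 2 μ := hX.sub (memLp_const a)
  have hYb : MemLp (fun ω => Y ω - b) 2 μ := hY.sub (memLp_const b)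
  have h := covariance_eq_sub hXa hYb
  rw [covariance_sub_const_left (hX.integrable one_le_two),
    covariance_sub_const_right (hY.integrable one_le_two)] at h
  rw [h, integral_sub (hX.integrable one_le_two) (integrable_const a),
    integral_sub (hY.integrable one_le_two) (integrable_const b)]
  simp

section QuadraticForm

variable {n : Type*} {P : Measure (n → ℝ)}

lemma integrable_sub_mul_sub [IsFiniteMeasure P] (hX : ∀ i, MemLp (fun x => x i) 2 P)
    (a : n → ℝ) (i j : n) : Integrable (fun x => (x i - a i) * (x j - a j)) P :=
  ((hX i).sub (memLp_const _)).integrable_mul ((hX j).sub (memLp_const _))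

variable [Fintype n]

lemma memLp_two_apply_of_integrable_sum_sq (h : Integrable (fun x => ∑ i, x i ^ 2) P) (i : n) :
    MemLp (fun x => x i) 2 P := by
  refine (memLp_two_iff_integrable_sq (measurable_pi_apply i).aestronglyMeasurable).2 <|
    h.mono' ((measurable_pi_apply i).pow_const 2).aestronglyMeasurable <| ae_of_all _ fun x => ?_
  rw [Real.norm_of_nonneg (sq_nonneg _)]
  exact Finset.single_le_sum (fun k _ => sq_nonneg (x k)) (Finset.mem_univ i)

lemma dotProduct_mulVec_self_eq_sum (A : Matrix n n ℝ) (v : n → ℝ) :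
    v ⬝ᵥ (A *ᵥ v) = ∑ i, ∑ j, A i j * (v j * v i) := by
  simp only [dotProduct, mulVec, Finset.mul_sum]
  exact Finset.sum_congr rfl fun _ _ => Finset.sum_congr rfl fun _ _ => by ring

variable [IsProbabilityMeasure P]

lemma integrable_dotProduct_mulVec_sub (hX : ∀ i, MemLp (fun x => x i) 2 P)
    (A : Matrix n n ℝ) (a : n → ℝ) :
    Integrable (fun x => (x - a) ⬝ᵥ (A *ᵥ (x - a))) P := by
  simp_rw [dotProduct_mulVec_self_eq_sum, Pi.sub_apply]
  exact integrable_finsetSum _ fun i _ => integrable_finsetSum _ fun j _ =>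
    (integrable_sub_mul_sub hX a j i).const_mul _

lemma integral_dotProduct_mulVec_sub (hX : ∀ i, MemLp (fun x => x i) 2 P) {mu : n → ℝ}
    {Sig : Matrix n n ℝ} (hmu : ∀ i, mu i = ∫ x, x i ∂P)
    (hSig : ∀ i j, Sig i j = ∫ x, (x i - mu i) * (x j - mu j) ∂P)
    (A : Matrix n n ℝ) (a : n → ℝ) :
    ∫ x, (x - a) ⬝ᵥ (A *ᵥ (x - a)) ∂P = (A * Sig).trace + (mu - a) ⬝ᵥ (A *ᵥ (mu - a)) := by
  have hcov : ∀ i j, ∫ x, (x j - a j) * (x i - a i) ∂P =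
      Sig j i + (mu j - a j) * (mu i - a i) := fun i j => by
    rw [integral_sub_mul_sub_eq_covariance_add (hX j) (hX i), covariance, ← hmu, ← hmu, hSig]
  simp_rw [dotProduct_mulVec_self_eq_sum, Pi.sub_apply]
  rw [integral_finsetSum (f := fun i (x : n → ℝ) => ∑ j, A i j * ((x j - a j) * (x i - a i))) _
    fun i _ => integrable_finsetSum _ fun j _ => (integrable_sub_mul_sub hX a j i).const_mul _]
  simp_rw [integral_finsetSum _ fun j _ => (integrable_sub_mul_sub hX a j _).const_mul _,
    integral_const_mul, hcov, mul_add, Finset.sum_add_distrib]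
  simp [trace, mul_apply]

end QuadraticForm

section Density

variable {α : Type*} [MeasurableSpace α] {ν : Measure α} {p : α → ℝ}

lemma integrable_log_withDensity (hpm : Measurable p) (hp : ∀ x, 0 ≤ p x)
    (hent : Integrable (fun x => p x * |Real.log (p x)|) ν) :
    Integrable (fun x => Real.log (p x)) (ν.withDensity fun x => ENNReal.ofReal (p x)) := by
  rw [integrable_withDensity_iff_integrable_smul' hpm.ennreal_ofReal
    (ae_of_all _ fun _ => ENNReal.ofReal_lt_top)]
  simp_rw [ENNReal.toReal_ofReal (hp _), smul_eq_mul]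
  refine (integrable_norm_iff (hpm.mul (Real.measurable_log.comp hpm)).aestronglyMeasurable).1 ?_
  simpa [abs_mul, abs_of_nonneg (hp _)] using hent

lemma ae_ne_zero_withDensity (hpm : Measurable p) :
    ∀ᵐ x ∂(ν.withDensity fun x => ENNReal.ofReal (p x)), p x ≠ 0 :=
  (ae_withDensity_iff hpm.ennreal_ofReal).2 <|
    ae_of_all _ fun x hx h0 => hx (by simp [h0])

end Density

section Gaussian

variable {d : ℕ} {m : Fin d → ℝ} {S : Matrix (Fin d) (Fin d) ℝ}

lemma log_gaussDensity (hS : S.PosDef) (x : Fin d → ℝ) :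
    Real.log (gaussDensity m S x) = -(d / 2 * Real.log (2 * π)) - Real.log S.det / 2 -
      (x - m) ⬝ᵥ (S⁻¹ *ᵥ (x - m)) / 2 := by
  have h2π : (0 : ℝ) < 2 * π := by positivity
  have h₁ := Real.rpow_pos_of_pos h2π (-(d : ℝ) / 2)
  have h₂ := Real.rpow_pos_of_pos hS.det_pos (-(1 : ℝ) / 2)
  unfold gaussDensity
  rw [Real.log_mul (mul_pos h₁ h₂).ne' (Real.exp_ne_zero _), Real.log_mul h₁.ne' h₂.ne',
    Real.log_rpow h2π, Real.log_rpow hS.det_pos, Real.log_exp]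
  ring

lemma klDivGauss_eq {P : Measure (Fin d → ℝ)} [IsProbabilityMeasure P] {p : (Fin d → ℝ) → ℝ}
    (hS : S.PosDef) (hlogp : Integrable (fun x => Real.log (p x)) P) (hp : ∀ᵐ x ∂P, p x ≠ 0)
    (hquad : Integrable (fun x => (x - m) ⬝ᵥ (S⁻¹ *ᵥ (x - m))) P) :
    klDivGauss P p m S = ∫ x, Real.log (p x) ∂P + d / 2 * Real.log (2 * π) +
      Real.log S.det / 2 + (∫ x, (x - m) ⬝ᵥ (S⁻¹ *ᵥ (x - m)) ∂P) / 2 := by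
  have hlogq : Integrable (fun x => Real.log (gaussDensity m S x)) P := by
    simp_rw [log_gaussDensity hS]
    exact (integrable_const _).sub (hquad.div_const 2)
  have hq_pos : ∀ x, 0 < gaussDensity m S x := fun x => by
    unfold gaussDensity
    have := hS.det_pos
    positivity
  unfold klDivGauss
  rw [integral_congr_ae (hp.mono fun x hx => Real.log_div hx (hq_pos x).ne'),
    integral_sub hlogp hlogq]
  simp_rw [log_gaussDensity hS]
  rw [integral_sub (integrable_const _) (hquad.div_const 2), integral_const, integral_div,
    probReal_univ, one_smul]
  ring

lemma klDivGauss_eq_of_moments {P : Measure (Fin d → ℝ)} [IsProbabilityMeasure P]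
    {p : (Fin d → ℝ) → ℝ} (hp : ∀ x, 0 ≤ p x) (hpm : Measurable p)
    (hP : P = volume.withDensity fun x => ENNReal.ofReal (p x))
    (hmom : Integrable (fun x => ∑ i, x i ^ 2) P)
    (hent : Integrable (fun x => p x * |Real.log (p x)|) volume)
    {mu : Fin d → ℝ} (hmu : ∀ i, mu i = ∫ x, x i ∂P) {Sig : Matrix (Fin d) (Fin d) ℝ}
    (hSig : ∀ i j, Sig i j = ∫ x, (x i - mu i) * (x j - mu j) ∂P) (hS : S.PosDef) :
    klDivGauss P p m S = ∫ x, Real.log (p x) ∂P + d / 2 * Real.log (2 * π) +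
      Real.log S.det / 2 + ((S⁻¹ * Sig).trace + (mu - m) ⬝ᵥ (S⁻¹ *ᵥ (mu - m))) / 2 := by
  have hX := memLp_two_apply_of_integrable_sum_sq hmom
  subst hP
  rw [klDivGauss_eq hS (integrable_log_withDensity hpm hp hent) (ae_ne_zero_withDensity hpm)
    (integrable_dotProduct_mulVec_sub hX _ _), integral_dotProduct_mulVec_sub hX hmu hSig]

end Gaussian

theorem stmt_5_general (d : ℕ)
    (p : (Fin d → ℝ) → ℝ) (hp : ∀ x, 0 ≤ p x) (hpm : Measurable p)
    (P : Measure (Fin d → ℝ)) [IsProbabilityMeasure P]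
    (hP : P = volume.withDensity fun x => ENNReal.ofReal (p x))
    (hmom : Integrable (fun x => ∑ i, x i ^ 2) P)
    (hent : Integrable (fun x => p x * |Real.log (p x)|) volume)
    (mu : Fin d → ℝ) (hmu : ∀ i, mu i = ∫ x, x i ∂P)
    (Sig : Matrix (Fin d) (Fin d) ℝ) (hSig : Sig.PosDef)
    (hSigdef : ∀ i j, Sig i j = ∫ x, (x i - mu i) * (x j - mu j) ∂P)
    (muHat : Fin d → ℝ) (SigHat : Matrix (Fin d) (Fin d) ℝ)
    (hSigHat : SigHat.PosDef) :
    klDivGauss P p muHat SigHat - klDivGauss P p 0 (1 : Matrix (Fin d) (Fin d) ℝ) ≤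
      (1 / 2) * ((⨅ i, hSigHat.1.eigenvalues i)⁻¹ *
          ((∑ i, (mu i - muHat i) ^ 2) +
            ∑ i, |(hSig.1.sub hSigHat.1).eigenvalues i|) +
        Real.sqrt d * Real.sqrt (∑ i, ∑ j, (Sig i j - SigHat i j) ^ 2) -
        ∑ i, mu i ^ 2) := by
  have htrace : (SigHat⁻¹ * Sig).trace = (SigHat⁻¹ * (Sig - SigHat)).trace + d := by
    rw [Matrix.mul_sub, trace_sub, nonsing_inv_mul _ hSigHat.det_pos.ne'.isUnit, trace_one,
      Fintype.card_fin]
    ring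
  have hcov := hSigHat.trace_inv_mul_le (hSig.1.sub hSigHat.1)
  have hmean : (mu - muHat) ⬝ᵥ (SigHat⁻¹ *ᵥ (mu - muHat)) ≤
      (⨅ i, hSigHat.1.eigenvalues i)⁻¹ * ∑ i, (mu i - muHat i) ^ 2 := by
    simpa [dotProduct, sq] using hSigHat.dotProduct_inv_mulVec_le (mu - muHat)
  have hdet : Real.log SigHat.det ≤ SigHat.trace - d := by
    simpa using hSigHat.log_det_le_trace_sub_card
  have hfrob : SigHat.trace - Sig.trace ≤
      √d * √(∑ i, ∑ j, (Sig i j - SigHat i j) ^ 2) := by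
    have := abs_trace_le_sqrt_card_mul_sqrt_sum_sq (Sig - SigHat)
    simp only [trace_sub, Fintype.card_fin, Matrix.sub_apply] at this
    linarith [neg_abs_le (Sig.trace - SigHat.trace)]
  have hmu_sq : (mu - 0) ⬝ᵥ (1⁻¹ *ᵥ (mu - 0)) = ∑ i, mu i ^ 2 := by
    simp [dotProduct, sq]
  rw [klDivGauss_eq_of_moments hp hpm hP hmom hent hmu hSigdef hSigHat,
    klDivGauss_eq_of_moments hp hpm hP hmom hent hmu hSigdef PosDef.one, hmu_sq, inv_one, one_mul,
    det_one, Real.log_one]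
  linarith

/-- quantitative KL-reduction bound from the proof of
Theorem 1: with `Q₀ = N(0, I_d)` and `Q̂ = N(μ̂, Σ̂)`,
`D_KL(P ‖ Q̂) − D_KL(P ‖ Q₀)
  ≤ (1/2)·((1/λ̂_min)·(‖μ − μ̂‖₂² + ‖Σ − Σ̂‖_N) + √d·‖Σ − Σ̂‖_F − ‖μ‖₂²)`. -/
theorem stmt_5 (d : ℕ) (hd : 0 < d)
    (p : (Fin d → ℝ) → ℝ) (hp : ∀ x, 0 ≤ p x) (hpm : Measurable p)
    (P : Measure (Fin d → ℝ)) [IsProbabilityMeasure P]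
    (hP : P = volume.withDensity fun x => ENNReal.ofReal (p x))
    (hmom : Integrable (fun x => ∑ i, x i ^ 2) P)
    (hent : Integrable (fun x => p x * |Real.log (p x)|) volume)
    (mu : Fin d → ℝ) (hmu : ∀ i, mu i = ∫ x, x i ∂P)
    (Sig : Matrix (Fin d) (Fin d) ℝ) (hSig : Sig.PosDef)
    (hSigdef : ∀ i j, Sig i j = ∫ x, (x i - mu i) * (x j - mu j) ∂P)
    (muHat : Fin d → ℝ) (SigHat : Matrix (Fin d) (Fin d) ℝ)
    (hSigHat : SigHat.PosDef) :
    klDivGauss P p muHat SigHat - klDivGauss P p 0 (1 : Matrix (Fin d) (Fin d) ℝ) ≤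
      (1 / 2) * ((⨅ i, hSigHat.1.eigenvalues i)⁻¹ *
          ((∑ i, (mu i - muHat i) ^ 2) +
            ∑ i, |(hSig.1.sub hSigHat.1).eigenvalues i|) +
        Real.sqrt d * Real.sqrt (∑ i, ∑ j, (Sig i j - SigHat i j) ^ 2) -
        ∑ i, mu i ^ 2) :=
  stmt_5_general d p hp hpm P hP hmom hent mu hmu Sig hSig hSigdef muHat SigHat hSigHat
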